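/- arXiv:1801.00581 — 5 statements merged into one kernel-verified Lean document; each statement's English description precedes it below -/
import Mathlib

section
/- For a left-continuous t-norm T, the triangle function ⋆_T is sup-continuous: for any nonempty index set I, any family (F_i)_{i∈I} in Δ⁺ and any L ∈ Δ⁺, one has sup_{i∈I} (F_i ⋆_T L) = (sup_{i∈I} F_i) ⋆_T L. -/
open Filter Topology Set

/-- A (real-domain representation of a) distribution function in Δ⁺ :
nondecreasing, with values in [0,1], left-continuous, vanishing on (-∞,0]. -/
def MemDP (f : ℝ → ℝ) : Prop :=
  Monotone f ∧ (∀ t, 0 ≤ f t) ∧ (∀ t, f t ≤ 1) ∧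
  (∀ t : ℝ, Tendsto f (nhdsWithin t (Set.Iio t)) (nhds (f t))) ∧
  (∀ t ≤ (0:ℝ), f t = 0)

/-- The distribution H₀. -/
noncomputable def H0 : ℝ → ℝ := fun t => if 0 < t then 1 else 0

/-- The distribution H_∞ (zero at every finite point). -/
def Hinf : ℝ → ℝ := fun _ => 0

/-- Pointwise order on distribution functions. -/
def dpLE (f g : ℝ → ℝ) : Prop := ∀ t, f t ≤ g t

/-- Triangle function on Δ⁺. -/
structure IsTriangle (star : (ℝ → ℝ) → (ℝ → ℝ) → (ℝ → ℝ)) : Prop where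
  mem : ∀ f g, MemDP f → MemDP g → MemDP (star f g)
  comm : ∀ f g, MemDP f → MemDP g → star f g = star g f
  assoc : ∀ f g h, MemDP f → MemDP g → MemDP h →
    star f (star g h) = star (star f g) h
  ident : ∀ f, MemDP f → star f H0 = f
  mono : ∀ f g h, MemDP f → MemDP g → MemDP h → dpLE f g → dpLE (star f h) (star g h)

/-- Sup-continuity of a triangle function (suprema in Δ⁺ are pointwise). -/
def SupCont (star : (ℝ → ℝ) → (ℝ → ℝ) → (ℝ → ℝ)) : Prop :=
  ∀ (I : Type) (_ : Nonempty I) (F : I → ℝ → ℝ) (L : ℝ → ℝ),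
    (∀ i, MemDP (F i)) → MemDP L →
    ∀ t, (⨆ i, star (F i) L t) = star (fun s => ⨆ i, F i s) L t

/-- Weak convergence in Δ⁺: pointwise convergence at each continuity point of the limit. -/
def WConv (Fn : ℕ → ℝ → ℝ) (F : ℝ → ℝ) : Prop :=
  ∀ t, ContinuousAt F t → Tendsto (fun n => Fn n t) atTop (nhds (F t))

/-- Continuity of a triangle function w.r.t. weak convergence. -/
def StarCont (star : (ℝ → ℝ) → (ℝ → ℝ) → (ℝ → ℝ)) : Prop :=
  ∀ (Fn Ln : ℕ → ℝ → ℝ) (F L : ℝ → ℝ),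
    (∀ n, MemDP (Fn n)) → (∀ n, MemDP (Ln n)) → MemDP F → MemDP L →
    WConv Fn F → WConv Ln L → WConv (fun n => star (Fn n) (Ln n)) (star F L)

/-- Probabilistic metric space (G, D, ⋆). -/
structure IsPMS {G : Type} (D : G → G → ℝ → ℝ)
    (star : (ℝ → ℝ) → (ℝ → ℝ) → (ℝ → ℝ)) : Prop where
  tri : IsTriangle star
  mem : ∀ p q, MemDP (D p q)
  eq_iff : ∀ p q, D p q = H0 ↔ p = q
  symm : ∀ p q, D p q = D q p
  triangle_ineq : ∀ p q r, dpLE (star (D p q) (D q r)) (D p r)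

/-- Probabilistic invariant metric group. -/
structure IsPIMG {G : Type} [Group G] (D : G → G → ℝ → ℝ)
    (star : (ℝ → ℝ) → (ℝ → ℝ) → (ℝ → ℝ)) extends IsPMS D star : Prop where
  invL : ∀ p q r : G, D (r * p) (r * q) = D p q
  invR : ∀ p q r : G, D (p * r) (q * r) = D p q

/-- Probabilistic 1-Lipschitz map. -/
def Lip1 {G : Type} (D : G → G → ℝ → ℝ) (star : (ℝ → ℝ) → (ℝ → ℝ) → (ℝ → ℝ))
    (f : G → ℝ → ℝ) : Prop :=
  (∀ x, MemDP (f x)) ∧ ∀ x y, dpLE (star (D x y) (f y)) (f x)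

/-- δ_a(y) = D(y,a). -/
def dlt {G : Type} (D : G → G → ℝ → ℝ) (a : G) : G → ℝ → ℝ := fun y => D y a

/-- Sup-convolution (f ⊙ g)(x) = sup_{yz = x} f(y) ⋆ g(z), pointwise. -/
noncomputable def sconv {G : Type} [Group G] (star : (ℝ → ℝ) → (ℝ → ℝ) → (ℝ → ℝ))
    (f g : G → ℝ → ℝ) : G → ℝ → ℝ :=
  fun x t => ⨆ y : G, star (f (x * y⁻¹)) (g y) t

/-- Cauchy sequence for a probabilistic metric: D(a_n, a_p) → H₀ weakly. -/
def PCauchy {G : Type} (D : G → G → ℝ → ℝ) (a : ℕ → G) : Prop :=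
  ∀ t > (0:ℝ), ∀ ε > (0:ℝ), ∃ N, ∀ n ≥ N, ∀ p ≥ N, 1 - ε ≤ D (a n) (a p) t

/-- Π(G): probabilistic 1-Lipschitz maps that are pointwise weak limits of δ_{a_n}
for some Cauchy sequence (a_n). -/
def InPi {G : Type} (D : G → G → ℝ → ℝ) (star : (ℝ → ℝ) → (ℝ → ℝ) → (ℝ → ℝ))
    (f : G → ℝ → ℝ) : Prop :=
  Lip1 D star f ∧ ∃ a : ℕ → G, PCauchy D a ∧ ∀ x, WConv (fun n => D (a n) x) (f x)

/-- 𝔻(f,g) = sup_{x∈G} f(x) ⋆ g(x), pointwise. -/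
noncomputable def DD {G : Type} (star : (ℝ → ℝ) → (ℝ → ℝ) → (ℝ → ℝ))
    (f g : G → ℝ → ℝ) : ℝ → ℝ :=
  fun t => ⨆ x : G, star (f x) (g x) t

/-- t-norm on [0,1]. -/
structure IsTnorm (T : ℝ → ℝ → ℝ) : Prop where
  mem : ∀ x ∈ Set.Icc (0:ℝ) 1, ∀ y ∈ Set.Icc (0:ℝ) 1, T x y ∈ Set.Icc (0:ℝ) 1
  comm : ∀ x y, T x y = T y x
  assoc : ∀ x y z, T x (T y z) = T (T x y) z
  mono : ∀ x y z, y ≤ z → T x y ≤ T x z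
  one : ∀ x ∈ Set.Icc (0:ℝ) 1, T x 1 = x

/-- Left-continuity of a t-norm (in each variable; by commutativity one suffices). -/
def LeftCtsTnorm (T : ℝ → ℝ → ℝ) : Prop :=
  ∀ y x : ℝ, Tendsto (fun s => T s y) (nhdsWithin x (Set.Iio x)) (nhds (T x y))

/-- The triangle function ⋆_T : (F ⋆_T L)(t) = sup_{s+u=t} T(F(s), L(u)). -/
noncomputable def starT (T : ℝ → ℝ → ℝ) (f g : ℝ → ℝ) : ℝ → ℝ :=
  fun t => ⨆ s : ℝ, T (f s) (g (t - s))

/-!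
Left-continuity of `T` in its first argument, together with monotonicity, lets `T (·) y` commute
with suprema of bounded families; since every value lies in `[0, 1]`, the two suprema defining
`sup_i (F_i ⋆_T L)(t)` may then be interchanged.
-/

theorem Monotone.map_ciSup_of_continuousWithinAt_Iio {α β ι : Type*}
    [ConditionallyCompleteLinearOrder α] [TopologicalSpace α] [OrderTopology α]
    [ConditionallyCompleteLinearOrder β] [TopologicalSpace β] [OrderClosedTopology β]
    [Nonempty ι] {f : α → β} {g : ι → α} (Cf : ContinuousWithinAt f (Iio (iSup g)) (iSup g))
    (Mf : Monotone f) (bdd : BddAbove (range g)) : f (⨆ i, g i) = ⨆ i, f (g i) := by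
  have Cf' : ContinuousWithinAt f (range g) (sSup (range g)) :=
    (continuousWithinAt_Iio_iff_Iic.1 Cf).mono fun _ hx => le_csSup bdd hx
  rw [iSup, Mf.monotoneOn _ |>.map_csSup_of_continuousWithinAt Cf' (range_nonempty g) bdd,
    ← range_comp, iSup, Function.comp_def]

theorem ciSup_comm_of_le {α ι κ : Type*} [ConditionallyCompleteLattice α] [Nonempty ι]
    [Nonempty κ] {f : ι → κ → α} {b : α} (hb : ∀ i j, f i j ≤ b) :
    ⨆ i, ⨆ j, f i j = ⨆ j, ⨆ i, f i j := by
  have bdd_i : ∀ j, BddAbove (range fun i => f i j) := fun j =>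
    ⟨b, forall_mem_range.2 fun i => hb i j⟩
  have bdd_j : ∀ i, BddAbove (range (f i)) := fun i => ⟨b, forall_mem_range.2 (hb i)⟩
  have bdd_ij : BddAbove (range fun i => ⨆ j, f i j) :=
    ⟨b, forall_mem_range.2 fun i => ciSup_le (hb i)⟩
  have bdd_ji : BddAbove (range fun j => ⨆ i, f i j) :=
    ⟨b, forall_mem_range.2 fun j => ciSup_le fun i => hb i j⟩
  exact le_antisymm
    (ciSup_le fun i => ciSup_le fun j => (le_ciSup (bdd_i j) i).trans (le_ciSup bdd_ji j))
    (ciSup_le fun j => ciSup_le fun i => (le_ciSup (bdd_j i) j).trans (le_ciSup bdd_ij i))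

theorem MemDP.mem_Icc {f : ℝ → ℝ} (hf : MemDP f) (t : ℝ) : f t ∈ Icc (0 : ℝ) 1 :=
  ⟨hf.2.1 t, hf.2.2.1 t⟩

namespace IsTnorm

variable {T : ℝ → ℝ → ℝ}

theorem monotone_left (hT : IsTnorm T) (y : ℝ) : Monotone fun x => T x y := fun a b hab => by
  simpa only [hT.comm _ y] using hT.mono y a b hab

theorem map_ciSup_left (hT : IsTnorm T) (hlc : LeftCtsTnorm T) {ι : Type*} [Nonempty ι]
    {g : ι → ℝ} (bdd : BddAbove (range g)) (y : ℝ) : T (⨆ i, g i) y = ⨆ i, T (g i) y :=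
  (hT.monotone_left y).map_ciSup_of_continuousWithinAt_Iio (hlc y _) bdd

end IsTnorm

/-- for a left-continuous t-norm T, ⋆_T is sup-continuous. -/
theorem stmt2 (T : ℝ → ℝ → ℝ) (hT : IsTnorm T) (hlc : LeftCtsTnorm T)
    (I : Type) (hI : Nonempty I) (F : I → ℝ → ℝ) (L : ℝ → ℝ)
    (hF : ∀ i, MemDP (F i)) (hL : MemDP L) :
    ∀ t, (⨆ i, starT T (F i) L t) = starT T (fun s => ⨆ i, F i s) L t := by
  intro t
  have hle : ∀ i s, T (F i s) (L (t - s)) ≤ 1 := fun i s =>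
    (hT.mem _ ((hF i).mem_Icc s) _ (hL.mem_Icc (t - s))).2
  calc ⨆ i, starT T (F i) L t = ⨆ i, ⨆ s, T (F i s) (L (t - s)) := rfl
    _ = ⨆ s, ⨆ i, T (F i s) (L (t - s)) := ciSup_comm_of_le hle
    _ = starT T (fun s => ⨆ i, F i s) L t := iSup_congr fun s =>
      (hT.map_ciSup_left hlc ⟨1, forall_mem_range.2 fun i => ((hF i).mem_Icc s).2⟩ _).symm
end

section
/- Let (G,D,⋆) be a probabilistic metric space with ⋆ continuous. Then every probabilistic 1-Lipschitz map f : G → Δ⁺ is continuous: if D(x_n,x) → H_0 weakly, then f(x_n) → f(x) weakly. -/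
open Filter Topology Set

/-! A 1-Lipschitz map is lower semicontinuous for free: `D(xₙ,x) ⋆ f(x) ≤ f(xₙ)` and the left side
tends to `H₀ ⋆ f(x) = f(x)`. For the upper bound, if `f(xₙ)(t) ≥ b` along a subsequence, the step
distribution jumping to `b` just after `t` lies below every `f(xₙ)` of that subsequence, so
`D(x,xₙ) ⋆ step ≤ D(x,xₙ) ⋆ f(xₙ) ≤ f(x)`; letting `n → ∞` gives `b ≤ f(x)(u)` for all `u > t`,
and continuity of `f(x)` at `t` gives `b ≤ f(x)(t)`. -/

noncomputable def stepDP (a c : ℝ) : ℝ → ℝ := fun u => if a < u then c else 0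

lemma memDP_stepDP {a c : ℝ} (ha : 0 ≤ a) (hc0 : 0 ≤ c) (hc1 : c ≤ 1) :
    MemDP (stepDP a c) := by
  refine ⟨fun u v huv => ?_, fun u => ?_, fun u => ?_, fun u => ?_, fun u hu => ?_⟩
  · unfold stepDP; split_ifs <;> linarith
  · unfold stepDP; split_ifs <;> linarith
  · unfold stepDP; split_ifs <;> linarith
  · apply tendsto_const_nhds.congr'
    rcases le_or_gt u a with hle | hlt
    · filter_upwards [self_mem_nhdsWithin] with s (hs : s < u)
      simp [stepDP, not_lt.2 hle, not_lt.2 (hs.le.trans hle)]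
    · filter_upwards [Ioo_mem_nhdsLT hlt] with s hs
      simp [stepDP, hlt, hs.1]
  · simp [stepDP, not_lt.2 (hu.trans ha)]

lemma memDP_H0 : MemDP H0 := memDP_stepDP le_rfl zero_le_one le_rfl

lemma continuousAt_stepDP {a u : ℝ} (c : ℝ) (h : a < u) : ContinuousAt (stepDP a c) u :=
  (continuousAt_const (y := c)).congr <| by
    filter_upwards [Ioi_mem_nhds h] with v (hv : a < v)
    simp [stepDP, hv]

lemma stepDP_le {F : ℝ → ℝ} (hF : MemDP F) {a c : ℝ} (hc : c ≤ F a) : dpLE (stepDP a c) F := by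
  intro u
  unfold stepDP
  split_ifs with h
  · exact hc.trans (hF.1 h.le)
  · exact hF.2.1 u

lemma le_of_continuousAt_of_forall_lt {F : ℝ → ℝ} {t c : ℝ} (hF : ContinuousAt F t)
    (h : ∀ u, t < u → c ≤ F u) : c ≤ F t :=
  ge_of_tendsto (hF.tendsto.mono_left (nhdsWithin_le_nhds (s := Ioi t)))
    (eventually_nhdsWithin_of_forall h)

lemma WConv.comp_tendsto {Fn : ℕ → ℝ → ℝ} {F : ℝ → ℝ} (hF : WConv Fn F) {φ : ℕ → ℕ}
    (hφ : Tendsto φ atTop atTop) : WConv (fun k => Fn (φ k)) F :=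
  fun t ht => (hF t ht).comp hφ

section Triangle

variable {star : (ℝ → ℝ) → (ℝ → ℝ) → (ℝ → ℝ)}

lemma IsTriangle.H0_star (hT : IsTriangle star) {F : ℝ → ℝ} (hF : MemDP F) : star H0 F = F := by
  rw [hT.comm _ _ memDP_H0 hF, hT.ident F hF]

lemma IsTriangle.mono_right (hT : IsTriangle star) {F G H : ℝ → ℝ} (hF : MemDP F) (hG : MemDP G)
    (hH : MemDP H) (hGH : dpLE G H) : dpLE (star F G) (star F H) := by
  rw [hT.comm F G hF hG, hT.comm F H hF hH]
  exact hT.mono G H F hG hH hF hGH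

lemma IsTriangle.wconv_star_of_wconv_H0 (hT : IsTriangle star) (hc : StarCont star)
    {Dn : ℕ → ℝ → ℝ} {F : ℝ → ℝ} (hDn : ∀ n, MemDP (Dn n)) (hF : MemDP F) (hD : WConv Dn H0) :
    WConv (fun n => star (Dn n) F) F := by
  simpa only [hT.H0_star hF] using
    hc Dn (fun _ => F) H0 F hDn (fun _ => hF) memDP_H0 hF hD fun _ _ => tendsto_const_nhds

end Triangle

section Lipschitz

variable {G : Type} {D : G → G → ℝ → ℝ} {star : (ℝ → ℝ) → (ℝ → ℝ) → (ℝ → ℝ)} {f : G → ℝ → ℝ}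

lemma Lip1.star_stepDP_le (hf : Lip1 D star f) (h : IsPMS D star) (x y : G) {t b : ℝ}
    (ht : 0 < t) (hb0 : 0 ≤ b) (hb : b ≤ f y t) : dpLE (star (D x y) (stepDP t b)) (f x) :=
  fun u => (h.tri.mono_right (h.mem x y) (memDP_stepDP ht.le hb0 (hb.trans ((hf.1 y).2.2.1 t)))
    (hf.1 y) (stepDP_le (hf.1 y) hb) u).trans (hf.2 x y u)

lemma Lip1.le_of_frequently_le (hf : Lip1 D star f) (h : IsPMS D star) (hc : StarCont star)
    {x : G} {xn : ℕ → G} (hx : WConv (fun n => D (xn n) x) H0) {t b : ℝ}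
    (ht : ContinuousAt (f x) t) (ht0 : 0 < t) (hb0 : 0 ≤ b)
    (hfreq : ∃ᶠ n in atTop, b ≤ f (xn n) t) : b ≤ f x t := by
  obtain ⟨φ, hφ, hbφ⟩ := extraction_of_frequently_atTop hfreq
  have hS : MemDP (stepDP t b) := memDP_stepDP ht0.le hb0 ((hbφ 0).trans ((hf.1 _).2.2.1 t))
  have hlim : WConv (fun k => star (D x (xn (φ k))) (stepDP t b)) (stepDP t b) :=
    h.tri.wconv_star_of_wconv_H0 hc (fun k => h.mem _ _) hS
      (by simpa only [h.symm x] using hx.comp_tendsto hφ.tendsto_atTop)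
  refine le_of_continuousAt_of_forall_lt ht fun u hu => ?_
  have hle := le_of_tendsto (hlim u (continuousAt_stepDP b hu)) <|
    Eventually.of_forall fun k => hf.star_stepDP_le h x (xn (φ k)) ht0 hb0 (hbφ k) u
  simpa [stepDP, hu] using hle

end Lipschitz

/-- if ⋆ is continuous, every probabilistic 1-Lipschitz map is continuous. -/
theorem stmt6 {G : Type} (D : G → G → ℝ → ℝ)
    (star : (ℝ → ℝ) → (ℝ → ℝ) → (ℝ → ℝ)) (h : IsPMS D star)
    (hc : StarCont star) (f : G → ℝ → ℝ) (hf : Lip1 D star f)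
    (x : G) (xn : ℕ → G) (hx : WConv (fun n => D (xn n) x) H0) :
    WConv (fun n => f (xn n)) (f x) := by
  intro t ht
  rcases le_or_gt t 0 with ht0 | ht0
  · simp only [(hf.1 _).2.2.2.2 t ht0]
    exact tendsto_const_nhds
  refine tendsto_order.2 ⟨fun a ha => ?_, fun b hb => ?_⟩
  · have hlow := h.tri.wconv_star_of_wconv_H0 hc (fun n => h.mem (xn n) x) (hf.1 x) hx t ht
    filter_upwards [hlow.eventually (lt_mem_nhds ha)] with n hn
    exact hn.trans_le (hf.2 (xn n) x t)
  · by_contra hfreq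
    rw [not_eventually] at hfreq
    exact hb.not_ge <| hf.le_of_frequently_le h hc hx ht ht0 (((hf.1 x).2.1 t).trans hb.le)
      (hfreq.mono fun _ => le_of_not_gt)
end

section
/- Let (G,·,D,⋆) be a probabilistic invariant metric group with identity e. Then a map f : G → Δ⁺ is probabilistic 1-Lipschitz if and only if f ⊙ δ_e = δ_e ⊙ f = f, where ⊙ is the sup-convolution and δ_e(y) = D(y,e). -/
/-!
By invariance of `D`, both `f ⊙ δ_e` and `δ_e ⊙ f` equal `x ↦ ⨆ y, D(x,y) ⋆ f(y)` (for `f ⊙ δ_e`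
after the substitution `z = x y⁻¹`). Since `D(x,x) = H0` is the unit of `⋆`, the term `y = x` of
this supremum is `f(x)`, so the supremum equals `f` exactly when every term is at most `f(x)`,
i.e. when `f` is 1-Lipschitz.
-/

open Filter Topology Set

section

variable {G : Type} {D : G → G → ℝ → ℝ} {star : (ℝ → ℝ) → (ℝ → ℝ) → (ℝ → ℝ)}

theorem IsTriangle.bddAbove_range_apply {ι : Type} (hstar : IsTriangle star)
    {F L : ι → ℝ → ℝ} (hF : ∀ i, MemDP (F i)) (hL : ∀ i, MemDP (L i)) (t : ℝ) :
    BddAbove (range fun i => star (F i) (L i) t) :=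
  ⟨1, by rintro _ ⟨i, rfl⟩; exact (hstar.mem _ _ (hF i) (hL i)).2.2.1 t⟩

theorem IsPMS.star_dist_self (h : IsPMS D star) {u : ℝ → ℝ} (hu : MemDP u) (x : G) :
    star (D x x) u = u := by
  rw [h.tri.comm _ _ (h.mem x x) hu, (h.eq_iff x x).mpr rfl, h.tri.ident u hu]

theorem IsPMS.iSup_star_dist_eq_iff (h : IsPMS D star) {f : G → ℝ → ℝ}
    (hf : ∀ x, MemDP (f x)) :
    (fun x t => ⨆ y, star (D x y) (f y) t) = f ↔ ∀ x y, dpLE (star (D x y) (f y)) (f x) := by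
  have hbdd (x : G) (t : ℝ) := h.tri.bddAbove_range_apply (fun y => h.mem x y) hf t
  constructor
  · intro hsup x y t
    exact (le_ciSup (hbdd x t) y).trans_eq (congrFun (congrFun hsup x) t)
  · intro hlip
    funext x t
    have : Nonempty G := ⟨x⟩
    refine le_antisymm (ciSup_le fun y => hlip x y t) (le_ciSup_of_le (hbdd x t) x ?_)
    rw [h.star_dist_self (hf x)]

end

section

variable {G : Type} [Group G] {D : G → G → ℝ → ℝ} {star : (ℝ → ℝ) → (ℝ → ℝ) → (ℝ → ℝ)}

theorem dlt_one_mul_inv (hR : ∀ p q r : G, D (p * r) (q * r) = D p q) (x y : G) :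
    dlt D 1 (x * y⁻¹) = D x y := by
  simpa [dlt] using (hR (x * y⁻¹) 1 y).symm

theorem IsPIMG.dlt_one_eq_dist_mul_inv (h : IsPIMG D star) (x y : G) :
    dlt D 1 y = D x (x * y⁻¹) := by
  calc dlt D 1 y = D 1 y⁻¹ := by simpa [dlt] using h.invR 1 y⁻¹ y
    _ = D x (x * y⁻¹) := by simpa using (h.invL 1 y⁻¹ x).symm

theorem sconv_dlt_one_left (hR : ∀ p q r : G, D (p * r) (q * r) = D p q) (f : G → ℝ → ℝ) :
    sconv star (dlt D 1) f = fun x t => ⨆ y, star (D x y) (f y) t := by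
  funext x t
  simp only [sconv, dlt_one_mul_inv hR]

theorem IsPIMG.sconv_dlt_one_right (h : IsPIMG D star) {f : G → ℝ → ℝ}
    (hf : ∀ x, MemDP (f x)) :
    sconv star f (dlt D 1) = fun x t => ⨆ y, star (D x y) (f y) t := by
  funext x t
  refine (Equiv.inv G |>.trans (Equiv.mulLeft x)).iSup_congr fun y => ?_
  simp only [Equiv.trans_apply, Equiv.inv_apply, Equiv.coe_mulLeft]
  rw [h.dlt_one_eq_dist_mul_inv x y, h.tri.comm _ _ (hf _) (h.mem _ _)]

end

/-- f is probabilistic 1-Lipschitz iff f ⊙ δ_e = δ_e ⊙ f = f. -/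
theorem stmt9 {G : Type} [Group G] (D : G → G → ℝ → ℝ)
    (star : (ℝ → ℝ) → (ℝ → ℝ) → (ℝ → ℝ)) (h : IsPIMG D star)
    (f : G → ℝ → ℝ) (hmem : ∀ x, MemDP (f x)) :
    (∀ x y, dpLE (star (D x y) (f y)) (f x)) ↔
      (sconv star f (dlt D 1) = f ∧ sconv star (dlt D 1) f = f) := by
  rw [h.sconv_dlt_one_right hmem, sconv_dlt_one_left h.invR, and_self,
    h.iSup_star_dist_eq_iff hmem]
end

section
/- Let (G,·,D,⋆) be a probabilistic invariant metric group with ⋆ sup-continuous. Then the sup-convolution ⊙ is associative on maps G → Δ⁺: (f ⊙ g) ⊙ h = f ⊙ (g ⊙ h). -/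
open Filter Topology Set

/- Both sides unfold, by sup-continuity of `⋆` (used on the right together with commutativity),
to a double supremum of `(f y ⋆ g z) ⋆ k w` over the factorisations `y * z * w = x`;
associativity of `⋆` makes the terms agree, and the two suprema agree after exchanging their
order and reindexing. All values lie in `[0, 1]`, so these real suprema are not junk values. -/

lemma ciSup_comm_of_bddAbove {α β γ : Type*} [ConditionallyCompleteLattice α] {f : β → γ → α}
    (hf : BddAbove (range (Function.uncurry f))) :
    ⨆ b, ⨆ c, f b c = ⨆ c, ⨆ b, f b c := by
  have hf' : BddAbove (range (Function.uncurry (Function.swap f))) := by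
    obtain ⟨B, hB⟩ := hf
    exact ⟨B, by rintro _ ⟨⟨c, b⟩, rfl⟩; exact hB ⟨(b, c), rfl⟩⟩
  calc ⨆ b, ⨆ c, f b c = ⨆ p, Function.uncurry f p := (ciSup_prod hf).symm
    _ = ⨆ q, Function.uncurry (Function.swap f) q := (Equiv.prodComm γ β).iSup_comp.symm
    _ = ⨆ c, ⨆ b, f b c := ciSup_prod hf'

namespace MemDP

variable {f : ℝ → ℝ}

lemma nonneg (hf : MemDP f) (t : ℝ) : 0 ≤ f t := hf.2.1 t

lemma le_one (hf : MemDP f) (t : ℝ) : f t ≤ 1 := hf.2.2.1 t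

lemma tendsto_left (hf : MemDP f) (t : ℝ) : Tendsto f (𝓝[<] t) (𝓝 (f t)) := hf.2.2.2.1 t

lemma eq_zero_of_nonpos (hf : MemDP f) {t : ℝ} (ht : t ≤ 0) : f t = 0 := hf.2.2.2.2 t ht

lemma bddAbove_range {I : Type*} {F : I → ℝ → ℝ} (hF : ∀ i, MemDP (F i)) (t : ℝ) :
    BddAbove (range fun i => F i t) :=
  ⟨1, by rintro _ ⟨i, rfl⟩; exact (hF i).le_one t⟩

protected lemma iSup {I : Type*} [Nonempty I] {F : I → ℝ → ℝ} (hF : ∀ i, MemDP (F i)) :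
    MemDP (fun t => ⨆ i, F i t) := by
  have bdd := bddAbove_range hF
  have mono : Monotone (fun t => ⨆ i, F i t) :=
    fun s t hst => ciSup_mono (bdd t) fun i => (hF i).1 hst
  refine ⟨mono, fun t => ?_, fun t => ciSup_le fun i => (hF i).le_one t, fun t => ?_,
    fun t ht => ?_⟩
  · exact le_ciSup_of_le (bdd t) (Classical.arbitrary I) ((hF _).nonneg t)
  · rw [tendsto_order]
    refine ⟨fun a ha => ?_, fun a ha => ?_⟩
    · obtain ⟨i, hi⟩ := exists_lt_of_lt_ciSup ha
      filter_upwards [(tendsto_order.1 ((hF i).tendsto_left t)).1 a hi] with s hs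
      exact hs.trans_le (le_ciSup (bdd s) i)
    · filter_upwards [self_mem_nhdsWithin] with s hs
      exact (mono (le_of_lt hs)).trans_lt ha
  · simp only [(hF _).eq_zero_of_nonpos ht, ciSup_const]

end MemDP

section SupConvolution

variable {G : Type} [Group G] {star : (ℝ → ℝ) → (ℝ → ℝ) → (ℝ → ℝ)} {f g k : G → ℝ → ℝ}

lemma SupCont.star_iSup (hsc : SupCont star) (hstar : IsTriangle star) {I : Type} [Nonempty I]
    {F : I → ℝ → ℝ} {L : ℝ → ℝ} (hF : ∀ i, MemDP (F i)) (hL : MemDP L) (t : ℝ) :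
    star L (fun s => ⨆ i, F i s) t = ⨆ i, star L (F i) t := by
  rw [hstar.comm _ _ hL (MemDP.iSup hF), ← hsc I ‹_› F L hF hL t]
  exact iSup_congr fun i => by rw [hstar.comm _ _ (hF i) hL]

lemma sconv_sconv_apply_left (hsc : SupCont star) (hstar : IsTriangle star)
    (hf : ∀ x, MemDP (f x)) (hg : ∀ x, MemDP (g x)) (hk : ∀ x, MemDP (k x)) (x : G) (t : ℝ) :
    sconv star (sconv star f g) k x t =
      ⨆ z, ⨆ y, star (star (f (x * z⁻¹ * y⁻¹)) (g y)) (k z) t :=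
  iSup_congr fun z =>
    (hsc G ⟨1⟩ _ (k z) (fun _ => hstar.mem _ _ (hf _) (hg _)) (hk z) t).symm

lemma sconv_sconv_apply_right (hsc : SupCont star) (hstar : IsTriangle star)
    (hf : ∀ x, MemDP (f x)) (hg : ∀ x, MemDP (g x)) (hk : ∀ x, MemDP (k x)) (x : G) (t : ℝ) :
    sconv star f (sconv star g k) x t =
      ⨆ y, ⨆ z, star (star (f (x * y⁻¹)) (g (y * z⁻¹))) (k z) t :=
  iSup_congr fun y => by
    refine (hsc.star_iSup hstar (F := fun z => star (g (y * z⁻¹)) (k z))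
      (fun _ => hstar.mem _ _ (hg _) (hk _)) (hf _) t).trans ?_
    exact iSup_congr fun z => by rw [hstar.assoc _ _ _ (hf _) (hg _) (hk _)]

end SupConvolution

/-- with ⋆ sup-continuous, the sup-convolution is associative. -/
theorem stmt10 {G : Type} [Group G] (D : G → G → ℝ → ℝ)
    (star : (ℝ → ℝ) → (ℝ → ℝ) → (ℝ → ℝ)) (h : IsPIMG D star)
    (hsc : SupCont star) (f g k : G → ℝ → ℝ)
    (hf : ∀ x, MemDP (f x)) (hg : ∀ x, MemDP (g x)) (hk : ∀ x, MemDP (k x)) :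
    sconv star (sconv star f g) k = sconv star f (sconv star g k) := by
  have hstar := h.tri
  funext x t
  have hbdd : BddAbove (range (Function.uncurry fun y z =>
      star (star (f (x * y⁻¹)) (g (y * z⁻¹))) (k z) t)) := by
    refine ⟨1, ?_⟩
    rintro _ ⟨⟨y, z⟩, rfl⟩
    exact (hstar.mem _ _ (hstar.mem _ _ (hf _) (hg _)) (hk z)).le_one t
  rw [sconv_sconv_apply_left hsc hstar hf hg hk, sconv_sconv_apply_right hsc hstar hf hg hk,
    ciSup_comm_of_bddAbove hbdd]
  exact iSup_congr fun z => (Equiv.mulRight z).iSup_congr fun y => by simp [mul_assoc]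
end

section
/- Let (G,D,⋆) be a probabilistic metric space with ⋆ continuous. Define 𝔻(f,g) := sup_{x∈G} f(x) ⋆ g(x) on Π(G). Then (Π(G), 𝔻, ⋆) is a probabilistic complete metric space, 𝔻(δ_a,δ_b) = D(a,b) for all a,b ∈ G, and {δ_a : a ∈ G} is dense in (Π(G), 𝔻). Hence every probabilistic metric space with continuous triangle function admits a completion. -/
open Filter Topology Set

/-!
Everything rests on Helly's selection theorem and on the continuity of `⋆`, which lets
inequalities `Fₙ ⋆ Gₙ ≤ Hₙ` pass to weak limits. If `(bₙ)` generates `g ∈ Π(G)`, then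
`𝔻(f, g) ≤ P` for every weak subsequential limit `P` of `f(bₙ)`; this gives the triangle
inequality, and `𝔻(f, f) = H₀` because `f(bₙ) → H₀`. For 1-Lipschitz `f`, `𝔻(δ_a, f) = f(a)`,
which yields the isometry, the density of `δ(G)` and `𝔻(f, g) = H₀ → f = g`.
For completeness choose `bₙ` with `Fₙ(bₙ) → H₀`. Then
`D(bₙ, bₘ) ≥ Fₙ(bₙ) ⋆ 𝔻(Fₙ, Fₘ) ⋆ Fₘ(bₘ)` makes `(bₙ)` Cauchy, and along a Cauchy sequence
`limsup D(bₙ, x)(s) ≤ liminf D(bₙ, x)(t)` for `s < t`, so `D(bₙ, ·)` converges weakly to some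
`f ∈ Π(G)`, which is the limit of `(Fₙ)`.
-/

section DistributionFunctions

lemma H0_of_pos {t : ℝ} (ht : 0 < t) : H0 t = 1 := if_pos ht

lemma H0_of_nonpos {t : ℝ} (ht : t ≤ 0) : H0 t = 0 := if_neg ht.not_gt

lemma continuousAt_H0 {t : ℝ} (ht : t ≠ 0) : ContinuousAt H0 t := by
  rcases ht.lt_or_gt with ht | ht
  · refine continuousAt_const.congr (f := fun _ => 0) ?_
    filter_upwards [Iio_mem_nhds ht] with s hs
    rw [H0_of_nonpos (le_of_lt hs)]
  · refine continuousAt_const.congr (f := fun _ => 1) ?_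
    filter_upwards [Ioi_mem_nhds ht] with s hs
    rw [H0_of_pos hs]

lemma MemDP.bddAbove_range_s14 {ι : Type*} {F : ι → ℝ → ℝ} (hF : ∀ i, MemDP (F i)) (t : ℝ) :
    BddAbove (range fun i => F i t) :=
  ⟨1, by rintro _ ⟨i, rfl⟩; exact (hF i).2.2.1 t⟩

lemma memDP_iSup {ι : Type*} [Nonempty ι] {F : ι → ℝ → ℝ} (hF : ∀ i, MemDP (F i)) :
    MemDP fun t => ⨆ i, F i t := by
  have hbdd := MemDP.bddAbove_range_s14 hF
  obtain ⟨i₀⟩ := ‹Nonempty ι›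
  refine ⟨fun s t hst => ciSup_mono (hbdd t) fun i => (hF i).1 hst,
    fun t => ((hF i₀).2.1 t).trans (le_ciSup (hbdd t) i₀),
    fun t => ciSup_le fun i => (hF i).2.2.1 t, fun t => ?_,
    fun t ht => by simp only [(hF _).2.2.2.2 t ht, ciSup_const]⟩
  rw [tendsto_order]
  refine ⟨fun c hc => ?_, fun c hc => ?_⟩
  · obtain ⟨i, hi⟩ := exists_lt_of_lt_ciSup hc
    filter_upwards [((hF i).2.2.2.1 t).eventually (eventually_gt_nhds hi)] with s hs
    exact hs.trans_le (le_ciSup (hbdd s) i)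
  · filter_upwards [self_mem_nhdsWithin] with s hs
    exact (ciSup_mono (hbdd t) fun i => (hF i).1 (le_of_lt hs)).trans_lt hc

lemma exists_continuousAt_Ioo {F G : ℝ → ℝ} (hF : Monotone F) (hG : Monotone G) {a b : ℝ}
    (hab : a < b) : ∃ s ∈ Ioo a b, ContinuousAt F s ∧ ContinuousAt G s := by
  have hdense : Dense ({s | ¬ContinuousAt F s} ∪ {s | ¬ContinuousAt G s})ᶜ :=
    (hF.countable_not_continuousAt.union hG.countable_not_continuousAt).dense_compl ℝ
  obtain ⟨s, hs, hsab⟩ := hdense.exists_between hab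
  simp only [mem_compl_iff, mem_union, mem_ofPred_eq, not_or, not_not] at hs
  exact ⟨s, hsab, hs⟩

end DistributionFunctions

section WeakConvergence

variable {Fn Gn : ℕ → ℝ → ℝ} {F G : ℝ → ℝ}

lemma WConv.comp_tendsto_s14 (h : WConv Fn F) {m : ℕ → ℕ} (hm : Tendsto m atTop atTop) :
    WConv (fun j => Fn (m j)) F :=
  fun t ht => (h t ht).comp hm

lemma wconv_const (F : ℝ → ℝ) : WConv (fun _ => F) F := fun _ _ => tendsto_const_nhds

lemma isBoundedUnder_le_apply (hF : ∀ n, MemDP (Fn n)) (t : ℝ) :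
    IsBoundedUnder (· ≤ ·) atTop fun n => Fn n t :=
  isBoundedUnder_of ⟨1, fun n => (hF n).2.2.1 t⟩

lemma isBoundedUnder_ge_apply (hF : ∀ n, MemDP (Fn n)) (t : ℝ) :
    IsBoundedUnder (· ≥ ·) atTop fun n => Fn n t :=
  isBoundedUnder_of ⟨0, fun n => (hF n).2.1 t⟩

lemma le_of_wconv (hF : MemDP F) (hG : MemDP G) (hFn : WConv Fn F) (hGn : WConv Gn G)
    (hle : ∀ n, dpLE (Fn n) (Gn n)) : dpLE F G := by
  intro t
  refine le_of_tendsto (hF.2.2.2.1 t) ?_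
  filter_upwards [self_mem_nhdsWithin] with s hst
  obtain ⟨r, hr, hFr, hGr⟩ := exists_continuousAt_Ioo hF.1 hG.1 hst
  calc F s ≤ F r := hF.1 (le_of_lt hr.1)
    _ ≤ G r := le_of_tendsto_of_tendsto' (hFn r hFr) (hGn r hGr) fun n => hle n r
    _ ≤ G t := hG.1 (le_of_lt hr.2)

lemma tendsto_one_iff_of_le_one {u : ℕ → ℝ} (hu : ∀ n, u n ≤ 1) :
    Tendsto u atTop (𝓝 1) ↔ ∀ ε > (0 : ℝ), ∀ᶠ n in atTop, 1 - ε ≤ u n := by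
  refine ⟨fun h ε hε => h.eventually (eventually_ge_nhds (by linarith)), fun h => ?_⟩
  rw [tendsto_order]
  refine ⟨fun c hc => ?_, fun c hc => Eventually.of_forall fun n => (hu n).trans_lt hc⟩
  filter_upwards [h ((1 - c) / 2) (by linarith)] with n hn
  linarith

lemma WConv.tendsto_one (h : WConv Fn H0) {t : ℝ} (ht : 0 < t) :
    Tendsto (fun n => Fn n t) atTop (𝓝 1) :=
  H0_of_pos ht ▸ h t (continuousAt_H0 ht.ne')

lemma wconv_H0_of_tendsto_one (hFn : ∀ n, MemDP (Fn n))
    (h : ∀ t > (0 : ℝ), Tendsto (fun n => Fn n t) atTop (𝓝 1)) : WConv Fn H0 := by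
  intro t _
  rcases le_or_gt t 0 with ht | ht
  · rw [H0_of_nonpos ht]
    exact tendsto_const_nhds.congr fun n => ((hFn n).2.2.2.2 t ht).symm
  · exact H0_of_pos ht ▸ h t ht

lemma wconv_H0_of_le (hGn : ∀ n, MemDP (Gn n)) (hFn : WConv Fn H0)
    (hle : ∀ n, dpLE (Fn n) (Gn n)) : WConv Gn H0 :=
  wconv_H0_of_tendsto_one hGn fun t ht =>
    tendsto_of_tendsto_of_tendsto_of_le_of_le (hFn.tendsto_one ht) tendsto_const_nhds
      (fun n => hle n t) fun n => (hGn n).2.2.1 t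

lemma wconv_H0_of_tendsto_zero (hFn : ∀ n, MemDP (Fn n)) {r : ℕ → ℝ}
    (hr : Tendsto r atTop (𝓝 0)) (hle : ∀ n, 1 - r n ≤ Fn n (r n)) : WConv Fn H0 := by
  refine wconv_H0_of_tendsto_one hFn fun t ht => ?_
  have hlow : Tendsto (fun n => 1 - r n) atTop (𝓝 1) := by
    simpa using (tendsto_const_nhds (x := (1 : ℝ))).sub hr
  refine tendsto_of_tendsto_of_tendsto_of_le_of_le' hlow tendsto_const_nhds ?_
    (Eventually.of_forall fun n => (hFn n).2.2.1 t)
  filter_upwards [hr.eventually (eventually_le_nhds ht)] with n hn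
  exact (hle n).trans ((hFn n).1 hn)

lemma exists_seq_wconv_H0_diag {α : Type*} {u : ℕ → α → ℝ → ℝ} (hu : ∀ n x, MemDP (u n x))
    (h : ∀ n, ∃ a : ℕ → α, WConv (fun k => u n (a k)) H0) :
    ∃ b : ℕ → α, WConv (fun n => u n (b n)) H0 := by
  have hpick (n : ℕ) : ∃ x, 1 - 1 / ((n : ℝ) + 1) ≤ u n x (1 / ((n : ℝ) + 1)) := by
    obtain ⟨a, ha⟩ := h n
    have hr : 0 < 1 / ((n : ℝ) + 1) := by positivity
    have hlt : 1 - 1 / ((n : ℝ) + 1) < 1 := by linarith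
    obtain ⟨k, hk⟩ := ((ha.tendsto_one hr).eventually (eventually_ge_nhds hlt)).exists
    exact ⟨a k, hk⟩
  choose b hb using hpick
  exact ⟨b, wconv_H0_of_tendsto_zero (fun n => hu n (b n))
    tendsto_one_div_add_atTop_nhds_zero_nat hb⟩

section Cauchy

variable {u : ℕ → ℕ → ℝ → ℝ}

lemma wconv_H0_of_cauchy (hu : ∀ n m, MemDP (u n m))
    (hc : ∀ t > (0 : ℝ), ∀ ε > (0 : ℝ), ∃ N, ∀ n ≥ N, ∀ m ≥ N, 1 - ε ≤ u n m t)
    {n m : ℕ → ℕ} (hn : Tendsto n atTop atTop) (hm : Tendsto m atTop atTop) :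
    WConv (fun j => u (n j) (m j)) H0 := by
  refine wconv_H0_of_tendsto_one (fun j => hu _ _) fun t ht => ?_
  refine (tendsto_one_iff_of_le_one fun j => (hu _ _).2.2.1 t).2 fun ε hε => ?_
  obtain ⟨N, hN⟩ := hc t ht ε hε
  filter_upwards [tendsto_atTop.1 hn N, tendsto_atTop.1 hm N] with j hnj hmj
  exact hN _ hnj _ hmj

lemma cauchy_of_wconv_H0
    (h : ∀ n m : ℕ → ℕ, Tendsto n atTop atTop → Tendsto m atTop atTop →
      WConv (fun j => u (n j) (m j)) H0) :
    ∀ t > (0 : ℝ), ∀ ε > (0 : ℝ), ∃ N, ∀ n ≥ N, ∀ m ≥ N, 1 - ε ≤ u n m t := by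
  by_contra! hcon
  obtain ⟨t, ht, ε, hε, hbad⟩ := hcon
  choose n hn m hm hlt using hbad
  have hlim := (h n m (tendsto_atTop_mono hn tendsto_id) (tendsto_atTop_mono hm tendsto_id)
    |>.tendsto_one ht).eventually (eventually_gt_nhds (show 1 - ε < 1 by linarith))
  obtain ⟨j, hj⟩ := hlim.exists
  exact (hlt j).not_gt hj

end Cauchy

end WeakConvergence

section WeakLimits

variable {Fn : ℕ → ℝ → ℝ}

lemma limsup_apply_mono (hFn : ∀ n, MemDP (Fn n)) {s t : ℝ} (hst : s ≤ t) :
    limsup (fun n => Fn n s) atTop ≤ limsup (fun n => Fn n t) atTop :=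
  limsup_le_limsup (Eventually.of_forall fun n => (hFn n).1 hst)
    (isBoundedUnder_ge_apply hFn s).isCoboundedUnder_le (isBoundedUnder_le_apply hFn t)

lemma liminf_apply_mono (hFn : ∀ n, MemDP (Fn n)) {s t : ℝ} (hst : s ≤ t) :
    liminf (fun n => Fn n s) atTop ≤ liminf (fun n => Fn n t) atTop :=
  liminf_le_liminf (Eventually.of_forall fun n => (hFn n).1 hst)
    (isBoundedUnder_ge_apply hFn s) (isBoundedUnder_le_apply hFn t).isCoboundedUnder_ge

/-- The limit is the left-continuous regularisation of `s ↦ limsup Fn s`. -/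
lemma exists_wconv_of_limsup_le_liminf (hFn : ∀ n, MemDP (Fn n))
    (h : ∀ s t, s < t → limsup (fun n => Fn n s) atTop ≤ liminf (fun n => Fn n t) atTop) :
    ∃ L, MemDP L ∧ WConv Fn L := by
  set g : ℝ → ℝ := fun s => limsup (fun n => Fn n s) atTop
  have hg : Monotone g := fun s t => limsup_apply_mono hFn
  have hg0 : ∀ s, 0 ≤ g s := fun s =>
    le_limsup_of_frequently_le (Frequently.of_forall fun n => (hFn n).2.1 s)
      (isBoundedUnder_le_apply hFn s)
  have hg1 : ∀ s, g s ≤ 1 := fun s =>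
    limsup_le_of_le (isBoundedUnder_ge_apply hFn s).isCoboundedUnder_le
      (Eventually.of_forall fun n => (hFn n).2.2.1 s)
  have hgz : ∀ s ≤ 0, g s = 0 := fun s hs => by
    simp only [g, (hFn _).2.2.2.2 s hs, limsup_const]
  have hL0 : ∀ t, 0 ≤ g.leftLim t := fun t => (hg0 (t - 1)).trans (hg.le_leftLim (by linarith))
  refine ⟨g.leftLim, ⟨hg.leftLim, hL0, fun t => (hg.leftLim_le le_rfl).trans (hg1 t),
    fun t => (continuousWithinAt_leftLim_Iic (hg.tendsto_leftLim t)).mono Iio_subset_Iic_self,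
    fun t ht => le_antisymm ((hg.leftLim_le le_rfl).trans (hgz t ht).le) (hL0 t)⟩,
    fun t ht => ?_⟩
  refine tendsto_of_le_liminf_of_limsup_le ?_ ?_
    (isBoundedUnder_le_apply hFn t) (isBoundedUnder_ge_apply hFn t)
  · refine le_of_tendsto (hg.tendsto_leftLim t) ?_
    filter_upwards [self_mem_nhdsWithin] with s hs using h s t hs
  · refine ge_of_tendsto (ht.tendsto.mono_left (nhdsWithin_le_nhds (s := Ioi t))) ?_
    filter_upwards [self_mem_nhdsWithin] with s hs using hg.le_leftLim hs

lemma exists_subseq_wconv (hFn : ∀ n, MemDP (Fn n)) :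
    ∃ φ : ℕ → ℕ, StrictMono φ ∧ ∃ L, MemDP L ∧ WConv (fun j => Fn (φ j)) L := by
  let u : ℕ → ℚ → Icc (0 : ℝ) 1 := fun n q => ⟨Fn n q, (hFn n).2.1 q, (hFn n).2.2.1 q⟩
  obtain ⟨v, -, φ, hφ, hconv⟩ := isCompact_univ.tendsto_subseq fun n => mem_univ (u n)
  have hq (q : ℚ) : Tendsto (fun j => Fn (φ j) q) atTop (𝓝 (v q)) := by
    exact ((continuous_subtype_val.comp (continuous_apply q)).tendsto v).comp hconv
  have hFφ : ∀ j, MemDP (Fn (φ j)) := fun j => hFn (φ j)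
  refine ⟨φ, hφ, exists_wconv_of_limsup_le_liminf hFφ fun s t hst => ?_⟩
  obtain ⟨q, hsq, hqt⟩ := exists_rat_btwn hst
  calc limsup (fun j => Fn (φ j) s) atTop ≤ limsup (fun j => Fn (φ j) q) atTop :=
        limsup_apply_mono hFφ hsq.le
    _ = liminf (fun j => Fn (φ j) q) atTop := (hq q).limsup_eq.trans (hq q).liminf_eq.symm
    _ ≤ liminf (fun j => Fn (φ j) t) atTop := liminf_apply_mono hFφ hqt.le

end WeakLimits

section Triangle

variable {star : (ℝ → ℝ) → (ℝ → ℝ) → (ℝ → ℝ)}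

lemma IsTriangle.H0_star_s14 (ht : IsTriangle star) {f : ℝ → ℝ} (hf : MemDP f) : star H0 f = f := by
  rw [ht.comm _ _ memDP_H0 hf, ht.ident f hf]

lemma IsTriangle.mono₂ (ht : IsTriangle star) {f f' g g' : ℝ → ℝ} (hf : MemDP f)
    (hf' : MemDP f') (hg : MemDP g) (hg' : MemDP g') (hff' : dpLE f f') (hgg' : dpLE g g') :
    dpLE (star f g) (star f' g') := fun t =>
  calc star f g t ≤ star f' g t := ht.mono _ _ _ hf hf' hg hff' t
    _ = star g f' t := by rw [ht.comm _ _ hf' hg]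
    _ ≤ star g' f' t := ht.mono _ _ _ hg hg' hf' hgg' t
    _ = star f' g' t := by rw [ht.comm _ _ hg' hf']

lemma StarCont.wconv_H0_star (hc : StarCont star) (ht : IsTriangle star) {Fn Gn : ℕ → ℝ → ℝ}
    {G : ℝ → ℝ} (hFn : ∀ n, MemDP (Fn n)) (hGn : ∀ n, MemDP (Gn n)) (hG : MemDP G)
    (hF : WConv Fn H0) (hGG : WConv Gn G) : WConv (fun n => star (Fn n) (Gn n)) G :=
  ht.H0_star_s14 hG ▸ hc Fn Gn H0 G hFn hGn memDP_H0 hG hF hGG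

end Triangle

section ProbabilisticMetricSpace

variable {G : Type} {D : G → G → ℝ → ℝ} {star : (ℝ → ℝ) → (ℝ → ℝ) → (ℝ → ℝ)}

lemma IsPMS.self_eq_H0 (h : IsPMS D star) (a : G) : D a a = H0 := (h.eq_iff a a).2 rfl

lemma lip1_dlt (h : IsPMS D star) (a : G) : Lip1 D star (dlt D a) :=
  ⟨fun x => h.mem x a, fun x y => h.triangle_ineq x y a⟩

lemma inPi_dlt (h : IsPMS D star) (a : G) : InPi D star (dlt D a) := by
  refine ⟨lip1_dlt h a, fun _ => a, fun t ht ε hε => ⟨0, fun _ _ _ _ => ?_⟩, fun x => ?_⟩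
  · rw [h.self_eq_H0, H0_of_pos ht]
    linarith
  · rw [dlt, h.symm]
    exact wconv_const _

lemma le_DD (h : IsPMS D star) {f g : G → ℝ → ℝ} (hf : ∀ x, MemDP (f x))
    (hg : ∀ x, MemDP (g x)) (x : G) : dpLE (star (f x) (g x)) (DD star f g) := fun t =>
  le_ciSup (MemDP.bddAbove_range_s14 (fun x => h.tri.mem _ _ (hf x) (hg x)) t) x

lemma memDP_DD [Nonempty G] (h : IsPMS D star) {f g : G → ℝ → ℝ} (hf : ∀ x, MemDP (f x))
    (hg : ∀ x, MemDP (g x)) : MemDP (DD star f g) :=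
  memDP_iSup fun x => h.tri.mem _ _ (hf x) (hg x)

lemma DD_comm (h : IsPMS D star) {f g : G → ℝ → ℝ} (hf : ∀ x, MemDP (f x))
    (hg : ∀ x, MemDP (g x)) : DD star f g = DD star g f :=
  funext fun t => iSup_congr fun x => by rw [h.tri.comm _ _ (hf x) (hg x)]

lemma DD_dlt_left (h : IsPMS D star) {f : G → ℝ → ℝ} (hf : Lip1 D star f) (a : G) :
    DD star (dlt D a) f = f a := by
  funext t
  refine le_antisymm (Real.iSup_le (fun x => ?_) ((hf.1 a).2.1 t)) ?_
  · show star (D x a) (f x) t ≤ f a t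
    rw [h.symm]
    exact hf.2 a x t
  · calc f a t = star (dlt D a a) (f a) t := by rw [dlt, h.self_eq_H0, h.tri.H0_star_s14 (hf.1 a)]
      _ ≤ DD star (dlt D a) f t := le_DD h (lip1_dlt h a).1 hf.1 a t

lemma DD_dlt_right (h : IsPMS D star) {f : G → ℝ → ℝ} (hf : Lip1 D star f) (a : G) :
    DD star f (dlt D a) = f a :=
  (DD_comm h hf.1 (lip1_dlt h a).1).trans (DD_dlt_left h hf a)

lemma wconv_apply_H0 (h : IsPMS D star) {f : G → ℝ → ℝ} {a : ℕ → G} (hf : Lip1 D star f)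
    (ha : PCauchy D a) (haf : ∀ x, WConv (fun n => D (a n) x) (f x)) :
    WConv (fun n => f (a n)) H0 := by
  refine wconv_H0_of_tendsto_one (fun n => hf.1 (a n)) fun t ht =>
    (tendsto_one_iff_of_le_one fun n => (hf.1 _).2.2.1 t).2 fun ε hε => ?_
  obtain ⟨N, hN⟩ := ha (t / 2) (by linarith) ε hε
  filter_upwards [eventually_ge_atTop N] with n hn
  obtain ⟨s, hs, hfs, -⟩ :=
    exists_continuousAt_Ioo (hf.1 (a n)).1 (hf.1 (a n)).1 (show t / 2 < t by linarith)
  have hlow : 1 - ε ≤ f (a n) s := by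
    refine ge_of_tendsto (haf (a n) s hfs) ?_
    filter_upwards [eventually_ge_atTop N] with p hp
    exact (hN p hp n hn).trans ((h.mem _ _).1 hs.1.le)
  exact hlow.trans ((hf.1 (a n)).1 hs.2.le)

/-- Along a subsequence `D (b n) x → L` weakly, and `D (b m) x ≥ D (b m) (b n) ⋆ D (b n) x`,
whose weak limit is `H0 ⋆ L = L`; a continuity point of `L` in `(s, t)` separates `c` and `c'`. -/
lemma le_of_frequently_of_pcauchy (h : IsPMS D star) (hc : StarCont star) {b : ℕ → G}
    (hb : PCauchy D b) (x : G) {s t : ℝ} (hst : s < t) {c c' : ℝ}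
    (hcs : ∃ᶠ n in atTop, c ≤ D (b n) x s) (hct : ∃ᶠ m in atTop, D (b m) x t ≤ c') :
    c ≤ c' := by
  obtain ⟨φ, hφ, hφc⟩ := extraction_of_frequently_atTop hcs
  obtain ⟨ψ, hψ, hψc⟩ := extraction_of_frequently_atTop hct
  obtain ⟨χ, hχ, L, hL, hLconv⟩ := exists_subseq_wconv fun j => h.mem (b (φ j)) x
  obtain ⟨r, hr, hLr, -⟩ := exists_continuousAt_Ioo hL.1 hL.1 hst
  have hpair : WConv (fun j => D (b (ψ (χ j))) (b (φ (χ j)))) H0 :=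
    wconv_H0_of_cauchy (fun n m => h.mem (b n) (b m)) hb
      (hψ.tendsto_atTop.comp hχ.tendsto_atTop) (hφ.tendsto_atTop.comp hχ.tendsto_atTop)
  have hstar := hc.wconv_H0_star h.tri (fun j => h.mem _ _) (fun j => h.mem _ _) hL hpair hLconv
  calc c ≤ L r := ge_of_tendsto (hLconv r hLr) <| Eventually.of_forall fun j =>
        (hφc (χ j)).trans ((h.mem _ _).1 hr.1.le)
    _ ≤ c' := le_of_tendsto (hstar r hLr) <| Eventually.of_forall fun j =>
        (h.triangle_ineq _ _ _ r).trans (((h.mem _ _).1 hr.2.le).trans (hψc (χ j)))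

lemma limsup_le_liminf_of_pcauchy (h : IsPMS D star) (hc : StarCont star) {b : ℕ → G}
    (hb : PCauchy D b) (x : G) {s t : ℝ} (hst : s < t) :
    limsup (fun n => D (b n) x s) atTop ≤ liminf (fun n => D (b n) x t) atTop := by
  have hbx : ∀ n, MemDP (D (b n) x) := fun n => h.mem (b n) x
  by_contra! hlt
  obtain ⟨c', hlc', hc'u⟩ := exists_between hlt
  obtain ⟨c, hc'c, hcu⟩ := exists_between hc'u
  have := le_of_frequently_of_pcauchy h hc hb x hst
    ((frequently_lt_of_lt_limsup (isBoundedUnder_ge_apply hbx s).isCoboundedUnder_le hcu).mono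
      fun _ => le_of_lt)
    ((frequently_lt_of_liminf_lt (isBoundedUnder_le_apply hbx t).isCoboundedUnder_ge hlc').mono
      fun _ => le_of_lt)
  linarith

lemma exists_lip1_wconv_of_pcauchy (h : IsPMS D star) (hc : StarCont star) {b : ℕ → G}
    (hb : PCauchy D b) :
    ∃ f, Lip1 D star f ∧ ∀ x, WConv (fun n => D (b n) x) (f x) := by
  choose f hf hbf using fun x => exists_wconv_of_limsup_le_liminf (fun n => h.mem (b n) x)
    fun s t => limsup_le_liminf_of_pcauchy h hc hb x
  refine ⟨f, ⟨hf, fun x y => ?_⟩, hbf⟩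
  have hlim := hc _ _ _ _ (fun _ => h.mem x y) (fun n => h.mem (b n) y) (h.mem x y) (hf y)
    (wconv_const _) (hbf y)
  refine le_of_wconv (h.tri.mem _ _ (h.mem x y) (hf y)) (hf x) hlim (hbf x) fun n => ?_
  rw [h.symm (b n) y, h.symm (b n) x]
  exact h.triangle_ineq x y (b n)

lemma DD_le_of_wconv (h : IsPMS D star) (hc : StarCont star) {f g : G → ℝ → ℝ} {b : ℕ → G}
    (hf : Lip1 D star f) (hg : ∀ x, MemDP (g x)) (hbg : ∀ x, WConv (fun n => D (b n) x) (g x))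
    {P : ℝ → ℝ} (hP : MemDP P) (hfb : WConv (fun n => f (b n)) P) : dpLE (DD star f g) P := by
  intro t
  refine Real.iSup_le (fun x => ?_) (hP.2.1 t)
  rw [h.tri.comm _ _ (hf.1 x) (hg x)]
  have hlim := hc _ _ _ _ (fun n => h.mem (b n) x) (fun _ => hf.1 x) (hg x) (hf.1 x) (hbg x)
    (wconv_const _)
  exact le_of_wconv (h.tri.mem _ _ (hg x) (hf.1 x)) hP hlim hfb (fun n => hf.2 (b n) x) t

lemma DD_triangle [Nonempty G] (h : IsPMS D star) (hc : StarCont star) {f g k : G → ℝ → ℝ}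
    (hf : InPi D star f) (hg : InPi D star g) (hk : InPi D star k) :
    dpLE (star (DD star f g) (DD star g k)) (DD star f k) := by
  obtain ⟨hgl, b, -, hbg⟩ := hg
  obtain ⟨φ, hφ, P, hP, hfP⟩ := exists_subseq_wconv fun n => hf.1.1 (b n)
  obtain ⟨ψ, hψ, Q, hQ, hkQ⟩ := exists_subseq_wconv fun j => hk.1.1 (b (φ j))
  have hcg : ∀ x, WConv (fun j => D (b (φ (ψ j))) x) (g x) := fun x =>
    (hbg x).comp_tendsto_s14 (hφ.tendsto_atTop.comp hψ.tendsto_atTop)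
  have hfP' : WConv (fun j => f (b (φ (ψ j)))) P := hfP.comp_tendsto_s14 hψ.tendsto_atTop
  have hfg : dpLE (DD star f g) P := DD_le_of_wconv h hc hf.1 hgl.1 hcg hP hfP'
  have hgk : dpLE (DD star g k) Q :=
    DD_comm h hgl.1 hk.1.1 ▸ DD_le_of_wconv h hc hk.1 hgl.1 hcg hQ hkQ
  have hfk : dpLE (star P Q) (DD star f k) :=
    le_of_wconv (h.tri.mem _ _ hP hQ) (memDP_DD h hf.1.1 hk.1.1)
      (hc _ _ _ _ (fun j => hf.1.1 _) (fun j => hk.1.1 _) hP hQ hfP' hkQ) (wconv_const _)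
      fun j => le_DD h hf.1.1 hk.1.1 (b (φ (ψ j)))
  exact fun t => (h.tri.mono₂ (memDP_DD h hf.1.1 hgl.1) hP (memDP_DD h hgl.1 hk.1.1) hQ
    hfg hgk t).trans (hfk t)

lemma DD_self [Nonempty G] (h : IsPMS D star) (hc : StarCont star) {f : G → ℝ → ℝ}
    (hf : InPi D star f) : DD star f f = H0 := by
  obtain ⟨hfl, a, ha, haf⟩ := hf
  have hfa := wconv_apply_H0 h hfl ha haf
  have hstar := hc.wconv_H0_star h.tri (fun n => hfl.1 _) (fun n => hfl.1 _) memDP_H0 hfa hfa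
  have hmem := memDP_DD h hfl.1 hfl.1
  funext t
  rcases le_or_gt t 0 with ht | ht
  · rw [hmem.2.2.2.2 t ht, H0_of_nonpos ht]
  · rw [H0_of_pos ht]
    exact le_antisymm (hmem.2.2.1 t) <| le_of_tendsto (hstar.tendsto_one ht) <|
      Eventually.of_forall fun n => le_DD h hfl.1 hfl.1 (a n) t

lemma apply_le_of_DD_eq_H0 [Nonempty G] (h : IsPMS D star) (hc : StarCont star)
    {f g : G → ℝ → ℝ} (hf : InPi D star f) (hg : InPi D star g) (hfg : DD star f g = H0)
    (x : G) : dpLE (f x) (g x) := by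
  have := DD_triangle h hc (inPi_dlt h x) hf hg
  rwa [DD_dlt_left h hf.1, DD_dlt_left h hg.1, hfg, h.tri.ident _ (hf.1.1 x)] at this

lemma DD_eq_H0_iff [Nonempty G] (h : IsPMS D star) (hc : StarCont star) {f g : G → ℝ → ℝ}
    (hf : InPi D star f) (hg : InPi D star g) : DD star f g = H0 ↔ f = g := by
  refine ⟨fun hfg => funext fun x => funext fun t => le_antisymm ?_ ?_,
    fun hfg => hfg ▸ DD_self h hc hf⟩
  · exact apply_le_of_DD_eq_H0 h hc hf hg hfg x t
  · exact apply_le_of_DD_eq_H0 h hc hg hf ((DD_comm h hg.1.1 hf.1.1).trans hfg) x t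

lemma star_DD_le [Nonempty G] (h : IsPMS D star) (hc : StarCont star) {f g : G → ℝ → ℝ}
    (hf : InPi D star f) (hg : InPi D star g) (x y : G) :
    dpLE (star (f x) (star (DD star f g) (g y))) (D x y) := by
  have hxy := DD_triangle h hc (inPi_dlt h x) hf (inPi_dlt h y)
  have hfgy := DD_triangle h hc hf hg (inPi_dlt h y)
  rw [DD_dlt_left h hf.1, DD_dlt_right h hf.1, DD_dlt_left h (lip1_dlt h y)] at hxy
  rw [DD_dlt_right h hg.1, DD_dlt_right h hf.1] at hfgy
  intro t
  calc star (f x) (star (DD star f g) (g y)) t ≤ star (f x) (f y) t :=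
        h.tri.mono₂ (hf.1.1 x) (hf.1.1 x) (h.tri.mem _ _ (memDP_DD h hf.1.1 hg.1.1) (hg.1.1 y))
          (hf.1.1 y) (fun _ => le_rfl) hfgy t
    _ ≤ D x y t := hxy t

lemma exists_inPi_wconv_DD [Nonempty G] (h : IsPMS D star) (hc : StarCont star)
    (F : ℕ → G → ℝ → ℝ) (hF : ∀ n, InPi D star (F n))
    (hF_cauchy : ∀ t > (0 : ℝ), ∀ ε > (0 : ℝ), ∃ N, ∀ n ≥ N, ∀ m ≥ N,
      1 - ε ≤ DD star (F n) (F m) t) :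
    ∃ f, InPi D star f ∧ WConv (fun n => DD star (F n) f) H0 := by
  obtain ⟨b, hb⟩ := exists_seq_wconv_H0_diag (fun n => (hF n).1.1) fun n => by
    obtain ⟨hl, a, ha, haF⟩ := hF n
    exact ⟨a, wconv_apply_H0 h hl ha haF⟩
  have hFmem : ∀ n x, MemDP (F n x) := fun n => (hF n).1.1
  have hDDmem : ∀ n m, MemDP (DD star (F n) (F m)) := fun n m => memDP_DD h (hFmem n) (hFmem m)
  have hbC : PCauchy D b := cauchy_of_wconv_H0 fun n m hn hm => by
    have hDD := wconv_H0_of_cauchy hDDmem hF_cauchy hn hm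
    have hright := hc.wconv_H0_star h.tri (fun j => hDDmem _ _) (fun j => hFmem _ _) memDP_H0
      hDD (hb.comp_tendsto_s14 hm)
    have hlow := hc.wconv_H0_star h.tri (fun j => hFmem _ _)
      (fun j => h.tri.mem _ _ (hDDmem _ _) (hFmem _ _)) memDP_H0 (hb.comp_tendsto_s14 hn) hright
    exact wconv_H0_of_le (fun j => h.mem _ _) hlow fun j => star_DD_le h hc (hF _) (hF _) _ _
  obtain ⟨f, hfl, hbf⟩ := exists_lip1_wconv_of_pcauchy h hc hbC
  have hstar := hc.wconv_H0_star h.tri (fun n => hFmem n _) (fun n => hfl.1 _) memDP_H0 hb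
    (wconv_apply_H0 h hfl hbC hbf)
  exact ⟨f, ⟨hfl, b, hbC, hbf⟩, wconv_H0_of_le (fun n => memDP_DD h (hFmem n) hfl.1) hstar
    fun n => le_DD h (hFmem n) hfl.1 (b n)⟩

end ProbabilisticMetricSpace

/-- (Π(G), 𝔻, ⋆) is a probabilistic complete metric space,
𝔻(δ_a,δ_b) = D(a,b), and δ(G) is dense in Π(G): a completion of (G,D,⋆). -/
theorem stmt14 {G : Type} [Nonempty G] (D : G → G → ℝ → ℝ)
    (star : (ℝ → ℝ) → (ℝ → ℝ) → (ℝ → ℝ)) (h : IsPMS D star)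
    (hc : StarCont star) :
    (∀ a b : G, DD star (dlt D a) (dlt D b) = D a b) ∧
    (∀ f g, InPi D star f → InPi D star g → MemDP (DD star f g)) ∧
    (∀ f g, InPi D star f → InPi D star g → (DD star f g = H0 ↔ f = g)) ∧
    (∀ f g, InPi D star f → InPi D star g → DD star f g = DD star g f) ∧
    (∀ f g k, InPi D star f → InPi D star g → InPi D star k →
      dpLE (star (DD star f g) (DD star g k)) (DD star f k)) ∧
    (∀ F : ℕ → G → ℝ → ℝ, (∀ n, InPi D star (F n)) →
      (∀ t > (0:ℝ), ∀ ε > (0:ℝ), ∃ N, ∀ n ≥ N, ∀ m ≥ N,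
        1 - ε ≤ DD star (F n) (F m) t) →
      ∃ f, InPi D star f ∧ WConv (fun n => DD star (F n) f) H0) ∧
    (∀ f, InPi D star f →
      ∃ a : ℕ → G, WConv (fun n => DD star (dlt D (a n)) f) H0) := by
  refine ⟨fun a b => DD_dlt_left h (lip1_dlt h b) a,
    fun f g hf hg => memDP_DD h hf.1.1 hg.1.1,
    fun f g hf hg => DD_eq_H0_iff h hc hf hg,
    fun f g hf hg => DD_comm h hf.1.1 hg.1.1,
    fun f g k hf hg hk => DD_triangle h hc hf hg hk,
    exists_inPi_wconv_DD h hc,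
    fun f ⟨hfl, a, ha, haf⟩ => ⟨a, ?_⟩⟩
  simpa only [DD_dlt_left h hfl] using wconv_apply_H0 h hfl ha haf
end
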